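/- The following deterministic identity holds: √n · Ā(θ̄_n^b − θ̄_n) = −W^b + D₁^b − D₂^b − D₃^b + D₄^b − D₅^b, where W^b = n^{−1/2} Σ_{k=n+1}^{2n} (w_k − 1) ε_k, D₁^b = n^{−1/2}(θ_n^b − θ_n)/α_n, D₂^b = n^{−1/2}(θ_{2n}^b − θ_{2n})/α_{2n}, D₃^b = n^{−1/2} Σ_{k=n+1}^{2n} (w_k − 1) A_k (θ_{k−1}^b − θ*), D₄^b = n^{−1/2} Σ_{k=n+1}^{2n} (θ_{k−1}^b − θ_{k−1})(1/α_k − 1/α_{k−1}), and D₅^b = n^{−1/2} Σ_{k=n+1}^{2n} (A_k − Ā)(θ_{k−1}^b − θ_{k−1}). -/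

import Mathlib

/-!
Write `δ_k = θ_k^b − θ_k`. Subtracting the two recursions gives
`α_{k+1}⁻¹ (δ_k − δ_{k+1}) = w_{k+1} (A_{k+1} θ_k^b − b_{k+1}) − (A_{k+1} θ_k − b_{k+1})`,
and splitting `A_{k+1} = Ā + (A_{k+1} − Ā)` and `w_{k+1} = 1 + (w_{k+1} − 1)` turns this into an
expression of `Ā δ_k` through `α_{k+1}⁻¹ (δ_k − δ_{k+1})` and the summands of `W^b`, `D₃^b`, `D₅^b`
(note `ε_k = A_k θ* − b_k` since `Ā θ* = b̄`). Summing over `n ≤ k < 2n` and summing by parts the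
first term yields the boundary terms `D₁^b`, `D₂^b` and the step-size variation `D₄^b`.
-/

open MeasureTheory ProbabilityTheory Matrix Finset

noncomputable section

/-- Euclidean norm on `Fin d → ℝ`. -/
def vecNorm {d : ℕ} (x : Fin d → ℝ) : ℝ :=
  Real.sqrt (∑ i, x i ^ 2)

/-- Operator (spectral) norm of a matrix with respect to Euclidean norms. -/
def matOpNorm {d : ℕ} (B : Matrix (Fin d) (Fin d) ℝ) : ℝ :=
  sSup {r : ℝ | ∃ x : Fin d → ℝ, vecNorm x = 1 ∧ r = vecNorm (B.mulVec x)}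

/-- `Q`-weighted vector norm `‖x‖_Q = √(xᵀ Q x)`. -/
def qVecNorm {d : ℕ} (Q : Matrix (Fin d) (Fin d) ℝ) (x : Fin d → ℝ) : ℝ :=
  Real.sqrt (x ⬝ᵥ Q.mulVec x)

/-- Induced matrix `Q`-norm `‖B‖_Q = sup_{x ≠ 0} ‖Bx‖_Q / ‖x‖_Q`. -/
def qMatNorm {d : ℕ} (Q B : Matrix (Fin d) (Fin d) ℝ) : ℝ :=
  sSup {r : ℝ | ∃ x : Fin d → ℝ, x ≠ 0 ∧ r = qVecNorm Q (B.mulVec x) / qVecNorm Q x}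

/-- Smallest eigenvalue, via the Rayleigh quotient characterization. -/
def lambdaMin {d : ℕ} (M : Matrix (Fin d) (Fin d) ℝ) : ℝ :=
  sInf {r : ℝ | ∃ x : Fin d → ℝ, vecNorm x = 1 ∧ r = x ⬝ᵥ M.mulVec x}

/-- Largest eigenvalue, via the Rayleigh quotient characterization. -/
def lambdaMax {d : ℕ} (M : Matrix (Fin d) (Fin d) ℝ) : ℝ :=
  sSup {r : ℝ | ∃ x : Fin d → ℝ, vecNorm x = 1 ∧ r = x ⬝ᵥ M.mulVec x}

/-- `−A` is Hurwitz: every (complex) eigenvalue of `A` has positive real part. -/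
def NegHurwitz {d : ℕ} (A : Matrix (Fin d) (Fin d) ℝ) : Prop :=
  ∀ μ : ℂ, (A.map (algebraMap ℝ ℂ)).charpoly.IsRoot μ → 0 < μ.re

/-- Ordered matrix product `F k * F (k-1) * ⋯ * F m` (factors with larger index on the
left); equal to the identity matrix when `m > k`. -/
def matProd {d : ℕ} (m k : ℕ) (F : ℕ → Matrix (Fin d) (Fin d) ℝ) :
    Matrix (Fin d) (Fin d) ℝ :=
  ((List.range' m (k + 1 - m)).reverse.map F).prod

section BootstrapDecomposition

variable {K V ι : Type*}

theorem sum_Icc_succ_eq_sum_Ico {M : Type*} [AddCommMonoid M] (f : ℕ → M) (m p : ℕ) :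
    ∑ k ∈ Icc (m + 1) p, f k = ∑ k ∈ Ico m p, f (k + 1) := by
  rw [sum_Ico_add', Ico_add_one_right_eq_Icc]

theorem sum_Ico_smul_sub_succ_by_parts [Ring K] [AddCommGroup V] [Module K V] {m p : ℕ}
    (hmp : m ≤ p) (c : ℕ → K) (δ : ℕ → V) :
    ∑ k ∈ Ico m p, c (k + 1) • (δ k - δ (k + 1)) =
      c m • δ m - c p • δ p + ∑ k ∈ Ico m p, (c (k + 1) - c k) • δ k := by
  have hsplit : ∀ k, c (k + 1) • (δ k - δ (k + 1)) =
      -(c (k + 1) • δ (k + 1) - c k • δ k) + (c (k + 1) - c k) • δ k := fun k => by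
    rw [smul_sub, sub_smul]
    abel
  rw [sum_congr rfl fun k _ => hsplit k, sum_add_distrib, sum_neg_distrib,
    sum_Ico_sub (fun k => c k • δ k) hmp]
  abel

theorem mulVec_sub_eq_of_bootstrap_step [Field K] [Fintype ι] (A Ā : Matrix ι ι K)
    (b θ θb θs : ι → K) {a : K} (ha : a ≠ 0) (w : K) :
    Ā *ᵥ (θb - θ) =
      a⁻¹ • ((θb - θ) - ((θb - (a * w) • (A *ᵥ θb - b)) - (θ - a • (A *ᵥ θ - b))))
        - ((w - 1) • (A *ᵥ θs - b) + (w - 1) • (A *ᵥ (θb - θs)) + (A - Ā) *ᵥ (θb - θ)) := by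
  have hdiff : (θb - θ) - ((θb - (a * w) • (A *ᵥ θb - b)) - (θ - a • (A *ᵥ θ - b))) =
      a • (w • (A *ᵥ θb - b) - (A *ᵥ θ - b)) := by
    module
  rw [hdiff, inv_smul_smul₀ ha]
  simp only [mulVec_sub, sub_mulVec]
  module

end BootstrapDecomposition

theorem stmt_19_general {d n : ℕ}
    (A : ℕ → Matrix (Fin d) (Fin d) ℝ) (b : ℕ → Fin d → ℝ)
    (α : ℕ → ℝ) (hα : ∀ k, 0 < α k) (w : ℕ → ℝ)
    (Abar : Matrix (Fin d) (Fin d) ℝ) (bbar θstar : Fin d → ℝ)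
    (hsol : Abar.mulVec θstar = bbar)
    (eps : ℕ → Fin d → ℝ)
    (heps : ∀ k, eps k = (A k - Abar).mulVec θstar - (b k - bbar))
    (θ θb : ℕ → Fin d → ℝ)
    (hθrec : ∀ k : ℕ, θ (k + 1) = θ k - α (k + 1) • ((A (k + 1)).mulVec (θ k) - b (k + 1)))
    (hθbrec : ∀ k, n ≤ k → θb (k + 1) =
      θb k - (α (k + 1) * w (k + 1)) • ((A (k + 1)).mulVec (θb k) - b (k + 1))) :
    Real.sqrt n • Abar.mulVec
        (((n : ℝ)⁻¹ • ∑ k ∈ Finset.Ico n (2 * n), θb k)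
          - ((n : ℝ)⁻¹ • ∑ k ∈ Finset.Ico n (2 * n), θ k))
      = - ((Real.sqrt n)⁻¹ • ∑ k ∈ Finset.Icc (n + 1) (2 * n), (w k - 1) • eps k)
        + (Real.sqrt n)⁻¹ • (α n)⁻¹ • (θb n - θ n)
        - (Real.sqrt n)⁻¹ • (α (2 * n))⁻¹ • (θb (2 * n) - θ (2 * n))
        - (Real.sqrt n)⁻¹ • ∑ k ∈ Finset.Icc (n + 1) (2 * n),
            (w k - 1) • (A k).mulVec (θb (k - 1) - θstar)
        + (Real.sqrt n)⁻¹ • ∑ k ∈ Finset.Icc (n + 1) (2 * n),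
            ((α k)⁻¹ - (α (k - 1))⁻¹) • (θb (k - 1) - θ (k - 1))
        - (Real.sqrt n)⁻¹ • ∑ k ∈ Finset.Icc (n + 1) (2 * n),
            (A k - Abar).mulVec (θb (k - 1) - θ (k - 1)) := by
  have heps' : ∀ k, eps k = A k *ᵥ θstar - b k := fun k => by
    rw [heps, ← hsol, sub_mulVec]
    abel
  have hstep : ∀ k ∈ Ico n (2 * n), Abar *ᵥ (θb k - θ k) =
      (α (k + 1))⁻¹ • ((θb k - θ k) - (θb (k + 1) - θ (k + 1)))
        - ((w (k + 1) - 1) • eps (k + 1) + (w (k + 1) - 1) • (A (k + 1) *ᵥ (θb k - θstar))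
          + (A (k + 1) - Abar) *ᵥ (θb k - θ k)) := fun k hk => by
    rw [hθbrec k (mem_Ico.1 hk).1, hθrec k, heps']
    exact mulVec_sub_eq_of_bootstrap_step _ _ _ _ _ _ (hα _).ne' _
  rw [← smul_sub, ← sum_sub_distrib, mulVec_smul, smul_smul, ← div_eq_mul_inv,
    Real.sqrt_div_self', one_div, mulVec_sum, sum_congr rfl hstep, sum_sub_distrib,
    sum_Ico_smul_sub_succ_by_parts (by omega) (fun k => (α k)⁻¹)]
  simp only [sum_Icc_succ_eq_sum_Ico _ n, Nat.add_sub_cancel, sum_add_distrib, smul_add,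
    smul_sub]
  abel

/-- decomposition of the bootstrap Polyak–Ruppert error.
With the LSA iterates `θ_k` and the multiplier-bootstrap iterates `θ_k^b`
(`θ_n^b = θ_n`), the deterministic identity
`√n·Ā(θ̄_n^b − θ̄_n) = −W^b + D₁^b − D₂^b − D₃^b + D₄^b − D₅^b` holds, with
`W^b = n^{−1/2}Σ(w_k−1)ε_k`, `D₁^b = n^{−1/2}(θ_n^b−θ_n)/α_n`,
`D₂^b = n^{−1/2}(θ_{2n}^b−θ_{2n})/α_{2n}`,
`D₃^b = n^{−1/2}Σ(w_k−1)A_k(θ_{k−1}^b−θ*)`,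
`D₄^b = n^{−1/2}Σ(θ_{k−1}^b−θ_{k−1})(1/α_k−1/α_{k−1})`,
`D₅^b = n^{−1/2}Σ(A_k−Ā)(θ_{k−1}^b−θ_{k−1})`, sums over `k = n+1,…,2n`. -/
theorem stmt_19 {d n : ℕ} (hd : 0 < d) (hn : 0 < n)
    (A : ℕ → Matrix (Fin d) (Fin d) ℝ) (b : ℕ → Fin d → ℝ)
    (α : ℕ → ℝ) (hα : ∀ k, 0 < α k) (w : ℕ → ℝ)
    (Abar : Matrix (Fin d) (Fin d) ℝ) (bbar θstar : Fin d → ℝ)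
    (hsol : Abar.mulVec θstar = bbar)
    (eps : ℕ → Fin d → ℝ)
    (heps : ∀ k, eps k = (A k - Abar).mulVec θstar - (b k - bbar))
    (θ0 : Fin d → ℝ) (θ θb : ℕ → Fin d → ℝ)
    (hθ0 : θ 0 = θ0)
    (hθrec : ∀ k : ℕ, θ (k + 1) = θ k - α (k + 1) • ((A (k + 1)).mulVec (θ k) - b (k + 1)))
    (hθbinit : θb n = θ n)
    (hθbrec : ∀ k, n ≤ k → θb (k + 1) =
      θb k - (α (k + 1) * w (k + 1)) • ((A (k + 1)).mulVec (θb k) - b (k + 1))) :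
    Real.sqrt n • Abar.mulVec
        (((n : ℝ)⁻¹ • ∑ k ∈ Finset.Ico n (2 * n), θb k)
          - ((n : ℝ)⁻¹ • ∑ k ∈ Finset.Ico n (2 * n), θ k))
      = - ((Real.sqrt n)⁻¹ • ∑ k ∈ Finset.Icc (n + 1) (2 * n), (w k - 1) • eps k)
        + (Real.sqrt n)⁻¹ • (α n)⁻¹ • (θb n - θ n)
        - (Real.sqrt n)⁻¹ • (α (2 * n))⁻¹ • (θb (2 * n) - θ (2 * n))
        - (Real.sqrt n)⁻¹ • ∑ k ∈ Finset.Icc (n + 1) (2 * n),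
            (w k - 1) • (A k).mulVec (θb (k - 1) - θstar)
        + (Real.sqrt n)⁻¹ • ∑ k ∈ Finset.Icc (n + 1) (2 * n),
            ((α k)⁻¹ - (α (k - 1))⁻¹) • (θb (k - 1) - θ (k - 1))
        - (Real.sqrt n)⁻¹ • ∑ k ∈ Finset.Icc (n + 1) (2 * n),
            (A k - Abar).mulVec (θb (k - 1) - θ (k - 1)) :=
  stmt_19_general A b α hα w Abar bbar θstar hsol eps heps θ θb hθrec hθbrec
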